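/- arXiv:2602.13223 — 2 statements merged into one kernel-verified Lean document; each statement's English description precedes it below -/
import Mathlib

section
/- Let N ≥ 1 and let B be an N×N real matrix that is diagonalizable over ℝ, i.e., B = T·Λ·T⁻¹ for some invertible real T and real diagonal Λ. Then the 2N×2N companion matrix K = [[0, 1], [−B², −2B]] associated with the squared operator pencil S(λ) = (λ·1 + B)·(λ·1 + B) = λ²·1 + 2λ·B + B² is NOT diagonalizable: there exist no invertible real matrix P and real diagonal matrix D with K = P·D·P⁻¹. (Hence applying a strongly hyperbolic first-order operator twice always yields a weakly hyperbolic second-order system.) -/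
/-! `K = companion (2B) (B²)` splits as `K = Δ + (K - Δ)` with `Δ = diag(-B, -B)` diagonalizable,
`Δ` commuting with `K`, and `K - Δ = [[B, 1], [-B², -B]]` squaring to zero. If `K` were
diagonalizable, `K - Δ` would be a difference of commuting semisimple endomorphisms, hence
semisimple, and nilpotent, hence zero; but its upper right block is `1`. -/

open Matrix Polynomial

namespace Matrix

section Diagonalizable

variable {n m K : Type*} [Fintype n] [DecidableEq n] [Fintype m] [DecidableEq m] [Field K]

def IsDiagonalizable (A : Matrix n n K) : Prop :=
  ∃ (P : Matrix n n K) (d : n → K), IsUnit P.det ∧ A = P * diagonal d * P⁻¹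

theorem isSemisimple_toLinAlgEquiv'_diagonal (d : n → K) :
    Module.End.IsSemisimple (toLinAlgEquiv' (diagonal d)) := by
  classical
  let p : K[X] := ∏ c ∈ Finset.univ.image d, (X - C c)
  have hp : Squarefree p :=
    (separable_prod_X_sub_C_iff' (f := id)).mpr (fun _ _ _ _ h ↦ h) |>.squarefree
  have hroot (i : n) : p.eval (d i) = 0 :=
    eval_eq_zero_of_dvd_of_eval_eq_zero
      (Finset.dvd_prod_of_mem _ (Finset.mem_image_of_mem d (Finset.mem_univ i))) (by simp)
  refine Module.End.isSemisimple_of_squarefree_aeval_eq_zero hp ?_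
  rw [aeval_algHom_apply, ← diagonalAlgHom_apply (R := K), aeval_algHom_apply, aeval_pi_apply]
  simp [hroot]

theorem IsDiagonalizable.isSemisimple {A : Matrix n n K} (hA : A.IsDiagonalizable) :
    Module.End.IsSemisimple (toLinAlgEquiv' A) := by
  obtain ⟨P, d, hP, rfl⟩ := hA
  let := invertibleOfIsUnitDet P hP
  refine (LinearEquiv.isSemisimple_iff _ _ (P.toLinearEquiv' this) ?_).mp
    (isSemisimple_toLinAlgEquiv'_diagonal d)
  rw [toLinearEquiv'_apply]
  change toLinAlgEquiv' P * toLinAlgEquiv' (diagonal d) = toLinAlgEquiv' _ * toLinAlgEquiv' P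
  simp only [← map_mul, Matrix.mul_assoc, nonsing_inv_mul P hP, Matrix.mul_one]

theorem IsDiagonalizable.neg {A : Matrix n n K} (hA : A.IsDiagonalizable) :
    (-A).IsDiagonalizable := by
  obtain ⟨P, d, hP, rfl⟩ := hA
  exact ⟨P, -d, hP, by rw [Pi.neg_def, ← diagonal_neg, Matrix.mul_neg, Matrix.neg_mul]⟩

theorem IsDiagonalizable.fromBlocks_zero {A : Matrix n n K} {D : Matrix m m K}
    (hA : A.IsDiagonalizable) (hD : D.IsDiagonalizable) :
    (fromBlocks A 0 0 D).IsDiagonalizable := by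
  obtain ⟨P, a, hP, rfl⟩ := hA
  obtain ⟨Q, b, hQ, rfl⟩ := hD
  refine ⟨fromBlocks P 0 0 Q, Sum.elim a b, by simpa [det_fromBlocks_zero₂₁] using hP.mul hQ, ?_⟩
  rw [inv_fromBlocks_zero₂₁_of_isUnit_iff _ _ _
      (iff_of_true ((isUnit_iff_isUnit_det P).mpr hP) ((isUnit_iff_isUnit_det Q).mpr hQ)),
    ← fromBlocks_diagonal, fromBlocks_multiply, fromBlocks_multiply]
  simp

theorem IsDiagonalizable.eq_of_commute_of_isNilpotent_sub [PerfectField K]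
    {A C : Matrix n n K} (hA : A.IsDiagonalizable) (hC : C.IsDiagonalizable)
    (hAC : Commute A C) (hnil : IsNilpotent (A - C)) : A = C := by
  rw [← sub_eq_zero, ← map_eq_zero_iff _ toLinAlgEquiv'.injective, map_sub]
  exact Module.End.eq_zero_of_isNilpotent_isSemisimple (by simpa using hnil.map toLinAlgEquiv')
    (hA.isSemisimple.sub_of_commute (hAC.map toLinAlgEquiv') hC.isSemisimple)

end Diagonalizable

section Companion

variable {n R : Type*} [Fintype n] [DecidableEq n] [Ring R]

/-- Companion matrix of the pencil `λ² + λ B' + C'`. -/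
def companion (B' C' : Matrix n n R) : Matrix (n ⊕ n) (n ⊕ n) R :=
  fromBlocks 0 1 (-C') (-B')

theorem commute_companion_two_smul_mul_self (B : Matrix n n R) :
    Commute (companion ((2 : R) • B) (B * B)) (fromBlocks (-B) 0 0 (-B)) := by
  simp only [Commute, SemiconjBy, companion, fromBlocks_multiply, two_smul]
  congr 1 <;> noncomm_ring

theorem isNilpotent_companion_two_smul_mul_self_sub (B : Matrix n n R) :
    IsNilpotent (companion ((2 : R) • B) (B * B) - fromBlocks (-B) 0 0 (-B)) := by
  refine ⟨2, ?_⟩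
  rw [companion, sub_eq_add_neg, fromBlocks_neg, fromBlocks_add, pow_two, fromBlocks_multiply,
    ← fromBlocks_zero, two_smul]
  congr 1 <;> noncomm_ring

end Companion

end Matrix

/-- if `B = T·Λ·T⁻¹` is diagonalizable over ℝ, then the companion
matrix `K = [[0,1],[−B², −2B]]` of the squared pencil
`S(λ) = (λ·1 + B)² = λ²·1 + 2λ·B + B²` is NOT diagonalizable over ℝ. -/
theorem companion_of_squared_operator_not_diagonalizable
    (N : ℕ) (hN : 1 ≤ N) (B T : Matrix (Fin N) (Fin N) ℝ) (Λ : Fin N → ℝ)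
    (hT : IsUnit T.det) (hB : B = T * Matrix.diagonal Λ * T⁻¹) :
    ¬ ∃ (P : Matrix (Fin N ⊕ Fin N) (Fin N ⊕ Fin N) ℝ) (d : Fin N ⊕ Fin N → ℝ),
        IsUnit P.det ∧
        Matrix.fromBlocks 0 1 (-(B * B)) (-((2 : ℝ) • B)) =
          P * Matrix.diagonal d * P⁻¹ := by
  intro hK
  have hB' : B.IsDiagonalizable := ⟨T, Λ, hT, hB⟩
  have hKΔ : companion ((2 : ℝ) • B) (B * B) = fromBlocks (-B) 0 0 (-B) :=
    IsDiagonalizable.eq_of_commute_of_isNilpotent_sub hK (hB'.neg.fromBlocks_zero hB'.neg)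
      (commute_companion_two_smul_mul_self B) (isNilpotent_companion_two_smul_mul_self_sub B)
  have := congr_fun (congr_fun hKΔ (.inl ⟨0, hN⟩)) (.inr ⟨0, hN⟩)
  simp [companion] at this
end

section
/- Let g, ĝ, g̃ be symmetric 4×4 real matrices, f̂, f̃ antisymmetric 4×4 real matrices, Ĝ = ĝ + f̂, G̃ = g̃ + f̃. Let l, e ∈ ℝ⁴ satisfy lᵀgl = 0 (l is g-null), eᵀgl = 0 (e is g-orthogonal to l), and lᵀg̃l ≠ 0. Then the covector v = e − ((lᵀG̃e)/(lᵀg̃l))·l satisfies P(l)·v = 0, i.e., v lies in the kernel of the principal symbol P(l) = (lᵀgl)·g − (gl)(gl)ᵀ + (Ĝl)(G̃ᵀl)ᵀ. (These are the physical polarization eigenvectors v₁, v₂, w₁, w₂ of the gauge-fixed Maxwell system.) -/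
/-!
Applied to `v`, the symbol is `P(l) v = (lᵀgl) g v − ((gl)ᵀv) gl + ((G̃ᵀl)ᵀv) Ĝl`, and all three
coefficients vanish: `l` is null, `v` is `g`-orthogonal to `l` because `e` and `l` are, and
`(G̃ᵀl)ᵀv = lᵀG̃v = 0` since `v` is the projection of `e` along `l` onto the kernel of `lᵀG̃`,
which is well defined as `lᵀG̃l = lᵀg̃l ≠ 0` by antisymmetry of `f̃`.
-/

open Matrix

section

variable {n R : Type*} [Fintype n]

theorem Matrix.dotProduct_mulVec_self_eq_zero_of_transpose_eq_neg [CommRing R]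
    [NoZeroDivisors R] [CharZero R] {A : Matrix n n R} (hA : Aᵀ = -A) (v : n → R) :
    v ⬝ᵥ A *ᵥ v = 0 := by
  have h : v ⬝ᵥ A *ᵥ v = -(v ⬝ᵥ A *ᵥ v) := calc
    v ⬝ᵥ A *ᵥ v = v ⬝ᵥ Aᵀ *ᵥ v := by
      rw [mulVec_transpose, dotProduct_mulVec, dotProduct_comm]
    _ = -(v ⬝ᵥ A *ᵥ v) := by rw [hA, neg_mulVec, dotProduct_neg]
  exact CharZero.eq_neg_self_iff.mp h

theorem Matrix.dotProduct_mulVec_sub_div_smul_eq_zero [Field R] {A : Matrix n n R}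
    {u l : n → R} (hl : u ⬝ᵥ A *ᵥ l ≠ 0) (e : n → R) :
    u ⬝ᵥ A *ᵥ (e - (u ⬝ᵥ A *ᵥ e / u ⬝ᵥ A *ᵥ l) • l) = 0 := by
  rw [mulVec_sub, mulVec_smul, dotProduct_sub, dotProduct_smul, smul_eq_mul,
    div_mul_cancel₀ _ hl, sub_self]

variable [CommRing R]

def principalSymbol (g Ghat Gtil : Matrix n n R) (l : n → R) : Matrix n n R :=
  (l ⬝ᵥ g *ᵥ l) • g - vecMulVec (g *ᵥ l) (g *ᵥ l) + vecMulVec (Ghat *ᵥ l) (Gtilᵀ *ᵥ l)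

theorem principalSymbol_mulVec (g Ghat Gtil : Matrix n n R) (l v : n → R) :
    principalSymbol g Ghat Gtil l *ᵥ v =
      (l ⬝ᵥ g *ᵥ l) • g *ᵥ v - (g *ᵥ l ⬝ᵥ v) • g *ᵥ l + (Gtilᵀ *ᵥ l ⬝ᵥ v) • Ghat *ᵥ l := by
  simp only [principalSymbol, add_mulVec, sub_mulVec, smul_mulVec, vecMulVec_mulVec,
    op_smul_eq_smul]

end

theorem principalSymbol_physicalPolarization_eigenvector_general
    (g ghat gtil fhat ftil : Matrix (Fin 4) (Fin 4) ℝ)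
    (hftil : ftilᵀ = -ftil) (l e : Fin 4 → ℝ)
    (hl : l ⬝ᵥ g.mulVec l = 0) (he : e ⬝ᵥ g.mulVec l = 0)
    (hltil : l ⬝ᵥ gtil.mulVec l ≠ 0) :
    ((l ⬝ᵥ g.mulVec l) • g - Matrix.vecMulVec (g.mulVec l) (g.mulVec l) +
        Matrix.vecMulVec ((ghat + fhat).mulVec l) ((gtil + ftil)ᵀ.mulVec l)).mulVec
      (e - ((l ⬝ᵥ (gtil + ftil).mulVec e) / (l ⬝ᵥ gtil.mulVec l)) • l) = 0 := by
  change principalSymbol g (ghat + fhat) (gtil + ftil) l *ᵥ _ = 0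
  have hGl : l ⬝ᵥ (gtil + ftil) *ᵥ l = l ⬝ᵥ gtil *ᵥ l := by
    rw [add_mulVec, dotProduct_add,
      dotProduct_mulVec_self_eq_zero_of_transpose_eq_neg hftil, add_zero]
  rw [← hGl] at hltil ⊢
  set v := e - (l ⬝ᵥ (gtil + ftil) *ᵥ e / l ⬝ᵥ (gtil + ftil) *ᵥ l) • l
  have hgl_v : g *ᵥ l ⬝ᵥ v = 0 := by
    rw [dotProduct_sub, dotProduct_smul, dotProduct_comm _ e, dotProduct_comm _ l, he, hl,
      smul_zero, sub_zero]
  have hGl_v : (gtil + ftil)ᵀ *ᵥ l ⬝ᵥ v = 0 := by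
    rw [mulVec_transpose, ← dotProduct_mulVec]
    exact dotProduct_mulVec_sub_div_smul_eq_zero hltil e
  rw [principalSymbol_mulVec, hl, hgl_v, hGl_v, zero_smul, zero_smul, zero_smul, sub_zero,
    add_zero]

/-- if `l` is `g`-null (`lᵀgl = 0`), `e` is `g`-orthogonal to `l`
(`eᵀgl = 0`) and `lᵀg̃l ≠ 0`, then `v = e − ((lᵀG̃e)/(lᵀg̃l))·l` lies in the
kernel of the principal symbol
`P(l) = (lᵀgl)·g − (gl)(gl)ᵀ + (Ĝl)(G̃ᵀl)ᵀ`, where `Ĝ = ĝ + f̂`, `G̃ = g̃ + f̃`. -/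
theorem principalSymbol_physicalPolarization_eigenvector
    (g ghat gtil fhat ftil : Matrix (Fin 4) (Fin 4) ℝ)
    (hg : gᵀ = g) (hghat : ghatᵀ = ghat) (hgtil : gtilᵀ = gtil)
    (hfhat : fhatᵀ = -fhat) (hftil : ftilᵀ = -ftil) (l e : Fin 4 → ℝ)
    (hl : l ⬝ᵥ g.mulVec l = 0) (he : e ⬝ᵥ g.mulVec l = 0)
    (hltil : l ⬝ᵥ gtil.mulVec l ≠ 0) :
    ((l ⬝ᵥ g.mulVec l) • g - Matrix.vecMulVec (g.mulVec l) (g.mulVec l) +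
        Matrix.vecMulVec ((ghat + fhat).mulVec l) ((gtil + ftil)ᵀ.mulVec l)).mulVec
      (e - ((l ⬝ᵥ (gtil + ftil).mulVec e) / (l ⬝ᵥ gtil.mulVec l)) • l) = 0 :=
  principalSymbol_physicalPolarization_eigenvector_general g ghat gtil fhat ftil hftil l e hl he
    hltil
end
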